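/- Let k^{abc} be a Killing 3-tensor on ℝ^n. Then the vector field v^a = ∂_r ∂_s k^{rsa} (the double divergence of k) is a Killing vector field, i.e. ∂^a v^b + ∂^b v^a = 0. -/

import Mathlib

noncomputable section

/-- Partial derivative `∂_a f` in the `a`-th coordinate direction on `ℝⁿ`. -/
def pd {n : ℕ} (a : Fin n) (f : (Fin n → ℝ) → ℝ) : (Fin n → ℝ) → ℝ :=
  fun x => fderiv ℝ f x (Pi.single a 1)

/-- Raised partial derivative `∂^a f = g^{ab} ∂_b f`. -/
def pdUp {n : ℕ} (ginv : Matrix (Fin n) (Fin n) ℝ) (a : Fin n)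
    (f : (Fin n → ℝ) → ℝ) : (Fin n → ℝ) → ℝ :=
  fun x => ∑ b, ginv a b * pd b f x

/-- Laplace operator `Δ f = g^{ab} ∂_a ∂_b f`. -/
def lap {n : ℕ} (ginv : Matrix (Fin n) (Fin n) ℝ) (f : (Fin n → ℝ) → ℝ) :
    (Fin n → ℝ) → ℝ :=
  fun x => ∑ a, ∑ b, ginv a b * pd a (pd b f) x

/-- Iterated partial derivative `∂_{i 0} ⋯ ∂_{i (m-1)} f` along a tuple of indices. -/
def pdIter {n : ℕ} : (m : ℕ) → (Fin m → Fin n) → ((Fin n → ℝ) → ℝ) → ((Fin n → ℝ) → ℝ)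
  | 0, _, f => f
  | m + 1, i, f => pd (i 0) (pdIter m (fun j => i j.succ) f)

/-- A (smooth, totally symmetric) Killing `ℓ`-tensor: `∂^{(a₀} k^{a₁…a_ℓ)} = 0`. -/
def IsKillingTensor {n : ℕ} (ginv : Matrix (Fin n) (Fin n) ℝ) (ℓ : ℕ)
    (k : (Fin ℓ → Fin n) → (Fin n → ℝ) → ℝ) : Prop :=
  (∀ i, ContDiff ℝ (⊤ : ℕ∞) (k i)) ∧
  (∀ (σ : Equiv.Perm (Fin ℓ)) (i : Fin ℓ → Fin n), k (i ∘ σ) = k i) ∧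
  (∀ (i : Fin (ℓ + 1) → Fin n) (x : Fin n → ℝ),
    ∑ σ : Equiv.Perm (Fin (ℓ + 1)),
      pdUp ginv (i (σ 0)) (k (fun j => i (σ j.succ))) x = 0)

end

/-! Only linearity and commutativity of the partial derivatives enter, so the argument is run for
a commutative ring `R` of operators `D a` acting on a torsion-free `R`-module, and then applied
to the commutative algebra generated by the `∂_a` acting on smooth functions.

Write `d^{ab} = ∂_c k^{cab}` and `K^c = g_{pq} k^{pqc}`. Contracting the Killing equation with
`g` gives `2 d^{ab} + ∂^a K^b + ∂^b K^a = 0`. Contracting once more gives `∂_c K^c = 0`, and then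
taking a divergence gives `Δ K^a = -2 v^a`; applying `Δ` therefore yields
`Δ d^{ab} = ∂^a v^b + ∂^b v^a`. On the other hand, substituting the Killing equation into
`∂^a v^b = ∂_r ∂_s ∂^a k^{rsb}` gives `∂^a v^b + ∂^b v^a = -2 Δ d^{ab}`. Hence
`3 (∂^a v^b + ∂^b v^a) = 0`. -/

namespace KillingTensor

open Matrix Finset

variable {R V : Type*} [CommRing R] [AddCommGroup V] [Module R V] {n : ℕ}

section Metric

variable {g ginv : Matrix (Fin n) (Fin n) R} (D : Fin n → R)

lemma sum_mul_mulVec_of_isSymm (hg : g.IsSymm) (hgg : g * ginv = 1) (d : Fin n) :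
    ∑ c, g c d * (ginv *ᵥ D) c = D d := by
  have h : gᵀ *ᵥ (ginv *ᵥ D) = D := by rw [hg.eq, mulVec_mulVec, hgg, one_mulVec]
  simpa [mulVec, dotProduct] using congrFun h d

lemma sum_mul_mulVec_of_mul_eq_one (hgg : g * ginv = 1) (c : Fin n) :
    ∑ d, g c d * (ginv *ᵥ D) d = D c :=
  congrFun (show g *ᵥ (ginv *ᵥ D) = D by rw [mulVec_mulVec, hgg, one_mulVec]) c

lemma sum_sum_smul_mulVec_smul_left (hg : g.IsSymm) (hgg : g * ginv = 1) (X : Fin n → V) :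
    ∑ c, ∑ d, g c d • (ginv *ᵥ D) c • X d = ∑ d, D d • X d := by
  rw [sum_comm]
  simp_rw [smul_smul, ← sum_smul, sum_mul_mulVec_of_isSymm D hg hgg]

lemma sum_sum_smul_mulVec_smul_right (hgg : g * ginv = 1) (X : Fin n → V) :
    ∑ c, ∑ d, g c d • (ginv *ᵥ D) d • X c = ∑ c, D c • X c := by
  simp_rw [smul_smul, ← sum_smul, sum_mul_mulVec_of_mul_eq_one D hgg]

end Metric

def divergence (D : Fin n → R) (k : Fin n → Fin n → Fin n → V) (a b : Fin n) : V :=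
  ∑ c, D c • k c a b

def metricTrace (g : Matrix (Fin n) (Fin n) R) (k : Fin n → Fin n → Fin n → V) (c : Fin n) : V :=
  ∑ p, ∑ q, g p q • k p q c

def doubleDivergence (D : Fin n → R) (k : Fin n → Fin n → Fin n → V) (a : Fin n) : V :=
  ∑ r, ∑ s, (D r * D s) • k r s a

def laplacian (ginv : Matrix (Fin n) (Fin n) R) (D : Fin n → R) : R :=
  ∑ a, D a * (ginv *ᵥ D) a

def KillingEquation (ginv : Matrix (Fin n) (Fin n) R) (D : Fin n → R)
    (k : Fin n → Fin n → Fin n → V) : Prop :=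
  ∀ a b c d, (ginv *ᵥ D) a • k b c d + (ginv *ᵥ D) b • k a c d +
    (ginv *ᵥ D) c • k a b d + (ginv *ᵥ D) d • k a b c = 0

variable {g ginv : Matrix (Fin n) (Fin n) R} {D : Fin n → R} {k : Fin n → Fin n → Fin n → V}

theorem two_smul_divergence_add_mulVec_smul_metricTrace (hg : g.IsSymm) (hgg : g * ginv = 1)
    (hkill : KillingEquation ginv D k) (a b : Fin n) :
    2 • divergence D k a b + (ginv *ᵥ D) a • metricTrace g k b +
      (ginv *ᵥ D) b • metricTrace g k a = 0 := by
  have hsum : ∑ c, ∑ d, g c d • ((ginv *ᵥ D) c • k d a b + (ginv *ᵥ D) d • k c a b +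
      (ginv *ᵥ D) a • k c d b + (ginv *ᵥ D) b • k c d a) = 0 :=
    sum_eq_zero fun c _ => sum_eq_zero fun d _ => by rw [hkill c d a b, smul_zero]
  have htrace (e f : Fin n) :
      ∑ c, ∑ d, g c d • (ginv *ᵥ D) e • k c d f = (ginv *ᵥ D) e • metricTrace g k f := by
    simp only [metricTrace, smul_sum, smul_comm (g _ _) ((ginv *ᵥ D) e)]
  simp only [smul_add, sum_add_distrib, htrace, sum_sum_smul_mulVec_smul_right D hgg (k · a b),
    sum_sum_smul_mulVec_smul_left D hg hgg (k · a b)] at hsum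
  rw [← hsum, two_smul]
  rfl

theorem sum_smul_metricTrace_eq_zero [IsAddTorsionFree V] (hg : g.IsSymm) (hgg : g * ginv = 1)
    (h₁₂ : ∀ a b c, k a b c = k b a c) (h₂₃ : ∀ a b c, k a b c = k a c b)
    (hkill : KillingEquation ginv D k) :
    ∑ c, D c • metricTrace g k c = 0 := by
  have hsum : ∑ a, ∑ b, g a b • (2 • divergence D k a b + (ginv *ᵥ D) a • metricTrace g k b +
      (ginv *ᵥ D) b • metricTrace g k a) = 0 := by
    simp only [two_smul_divergence_add_mulVec_smul_metricTrace hg hgg hkill, smul_zero,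
      sum_const_zero]
  have htrace : ∑ a, ∑ b, g a b • divergence D k a b = ∑ c, D c • metricTrace g k c := by
    calc ∑ a, ∑ b, g a b • divergence D k a b
        = ∑ a, ∑ c, ∑ b, D c • g a b • k a b c := by
          refine sum_congr rfl fun a _ => ?_
          simp only [divergence, smul_sum, smul_comm (g _ _) (D _)]
          rw [Finset.sum_comm]
          refine sum_congr rfl fun c _ => sum_congr rfl fun b _ => ?_
          rw [h₁₂, h₂₃]
      _ = ∑ c, D c • metricTrace g k c := by
          rw [sum_comm]
          simp only [metricTrace, smul_sum]
  simp only [smul_add, sum_add_distrib, smul_comm (g _ _) (2 : ℕ), ← smul_sum, htrace,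
    sum_sum_smul_mulVec_smul_right D hgg, sum_sum_smul_mulVec_smul_left D hg hgg] at hsum
  refine nsmul_right_injective (M := V) (n := 4) (by norm_num) ?_
  simp only [smul_zero]
  rw [← hsum]
  module

theorem laplacian_smul_metricTrace [IsAddTorsionFree V] (hg : g.IsSymm) (hgg : g * ginv = 1)
    (h₁₂ : ∀ a b c, k a b c = k b a c) (h₂₃ : ∀ a b c, k a b c = k a c b)
    (hkill : KillingEquation ginv D k) (a : Fin n) :
    laplacian ginv D • metricTrace g k a = -(2 • doubleDivergence D k a) := by
  have hsum : ∑ b, D b • (2 • divergence D k a b + (ginv *ᵥ D) a • metricTrace g k b +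
      (ginv *ᵥ D) b • metricTrace g k a) = 0 := by
    simp only [two_smul_divergence_add_mulVec_smul_metricTrace hg hgg hkill, smul_zero,
      sum_const_zero]
  have hdiv : ∑ b, D b • divergence D k a b = doubleDivergence D k a := by
    simp only [divergence, doubleDivergence, smul_sum, smul_smul]
    rw [Finset.sum_comm]
    refine sum_congr rfl fun c _ => sum_congr rfl fun b _ => ?_
    rw [mul_comm, h₂₃]
  simp only [smul_add, sum_add_distrib, smul_comm (D _) (2 : ℕ),
    smul_comm (D _) ((ginv *ᵥ D) a)] at hsum
  rw [← smul_sum, ← smul_sum, hdiv, sum_smul_metricTrace_eq_zero hg hgg h₁₂ h₂₃ hkill, smul_zero,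
    add_zero] at hsum
  simp only [smul_smul] at hsum
  rw [laplacian, sum_smul, eq_neg_iff_add_eq_zero, ← hsum, add_comm]

theorem mulVec_smul_doubleDivergence_add (h₁₂ : ∀ a b c, k a b c = k b a c)
    (h₂₃ : ∀ a b c, k a b c = k a c b)
    (hkill : KillingEquation ginv D k) (a b : Fin n) :
    (ginv *ᵥ D) a • doubleDivergence D k b + (ginv *ᵥ D) b • doubleDivergence D k a =
      -(2 • laplacian ginv D • divergence D k a b) := by
  have hkill' (r s : Fin n) : (ginv *ᵥ D) a • k r s b =
      -((ginv *ᵥ D) r • k a s b + (ginv *ᵥ D) s • k a r b + (ginv *ᵥ D) b • k a r s) := by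
    rw [eq_neg_iff_add_eq_zero, ← hkill a r s b]
    abel
  have h₁ : ∑ r, ∑ s, (D r * D s) • (ginv *ᵥ D) r • k a s b =
      laplacian ginv D • divergence D k a b := by
    simp only [laplacian, divergence, smul_sum, sum_mul, sum_smul, smul_smul]
    conv_rhs => rw [Finset.sum_comm]
    refine sum_congr rfl fun r _ => sum_congr rfl fun s _ => ?_
    rw [h₁₂ a s b, mul_right_comm]
  have h₂ : ∑ r, ∑ s, (D r * D s) • (ginv *ᵥ D) s • k a r b =
      laplacian ginv D • divergence D k a b := by
    rw [Finset.sum_comm, ← h₁]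
    refine sum_congr rfl fun r _ => sum_congr rfl fun s _ => ?_
    rw [mul_comm]
  have h₃ : ∑ r, ∑ s, (D r * D s) • (ginv *ᵥ D) b • k a r s =
      (ginv *ᵥ D) b • doubleDivergence D k a := by
    simp only [doubleDivergence, smul_sum, smul_comm _ ((ginv *ᵥ D) b)]
    refine sum_congr rfl fun r _ => sum_congr rfl fun s _ => ?_
    rw [h₁₂, h₂₃]
  simp only [doubleDivergence, smul_sum, smul_comm ((ginv *ᵥ D) a), hkill', smul_neg, smul_add,
    sum_neg_distrib, sum_add_distrib, h₁, h₂, h₃]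
  module

theorem mulVec_smul_doubleDivergence_add_eq_zero [IsAddTorsionFree V] (hg : g.IsSymm)
    (hgg : g * ginv = 1) (h₁₂ : ∀ a b c, k a b c = k b a c) (h₂₃ : ∀ a b c, k a b c = k a c b)
    (hkill : KillingEquation ginv D k) (a b : Fin n) :
    (ginv *ᵥ D) a • doubleDivergence D k b + (ginv *ᵥ D) b • doubleDivergence D k a = 0 := by
  have hΔ := congrArg (laplacian ginv D • ·)
    (two_smul_divergence_add_mulVec_smul_metricTrace hg hgg hkill a b)
  simp only [smul_add, smul_zero, smul_comm (laplacian ginv D) (2 : ℕ),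
    smul_comm (laplacian ginv D) ((ginv *ᵥ D) _),
    laplacian_smul_metricTrace hg hgg h₁₂ h₂₃ hkill] at hΔ
  have hsym := mulVec_smul_doubleDivergence_add h₁₂ h₂₃ hkill a b
  refine nsmul_right_injective (M := V) (n := 6) (by norm_num) ?_
  simp only [smul_zero]
  linear_combination (norm := module) (2 : R) • hsym - (2 : R) • hΔ

end KillingTensor

noncomputable section SmoothFunctions

open Matrix

variable {n : ℕ} {f f₁ f₂ : (Fin n → ℝ) → ℝ}

lemma contDiff_pd (a : Fin n) (hf : ContDiff ℝ (⊤ : ℕ∞) f) : ContDiff ℝ (⊤ : ℕ∞) (pd a f) :=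
  (hf.fderiv_right (m := (⊤ : ℕ∞)) le_rfl).clm_apply contDiff_const

lemma pd_add (a : Fin n) (h₁ : Differentiable ℝ f₁) (h₂ : Differentiable ℝ f₂) :
    pd a (f₁ + f₂) = pd a f₁ + pd a f₂ := by
  ext x
  simp [pd, fderiv_add (h₁ x) (h₂ x)]

lemma pd_const_smul (a : Fin n) (c : ℝ) : pd a (c • f) = c • pd a f := by
  ext x
  simp [pd, fderiv_const_smul_field]

lemma pd_comm (a b : Fin n) (hf : ContDiff ℝ (⊤ : ℕ∞) f) : pd a (pd b f) = pd b (pd a f) := by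
  ext x
  have hdf : DifferentiableAt ℝ (fderiv ℝ f) x :=
    (hf.fderiv_right (m := (⊤ : ℕ∞)) le_rfl).differentiable (by simp) x
  have hsymm : IsSymmSndFDerivAt ℝ f x :=
    hf.contDiffAt.isSymmSndFDerivAt <| by
      simpa [minSmoothness_of_isRCLikeNormedField] using
        WithTop.coe_le_coe.mpr (le_top : (2 : ℕ∞) ≤ ⊤)
  have hsnd (v w : Fin n → ℝ) :
      fderiv ℝ (fun y => fderiv ℝ f y w) x v = fderiv ℝ (fderiv ℝ f) x v w := by
    rw [fderiv_clm_apply hdf (differentiableAt_const w)]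
    simp
  exact (hsnd _ _).trans ((hsymm _ _).trans (hsnd _ _).symm)

def smoothFunctions (n : ℕ) : Submodule ℝ ((Fin n → ℝ) → ℝ) where
  carrier := {f | ContDiff ℝ (⊤ : ℕ∞) f}
  add_mem' {f₁ f₂} (hf₁ : ContDiff ℝ (⊤ : ℕ∞) f₁) (hf₂ : ContDiff ℝ (⊤ : ℕ∞) f₂) := hf₁.add hf₂
  zero_mem' := (contDiff_zero_fun : ContDiff ℝ (⊤ : ℕ∞) fun _ : Fin n → ℝ => (0 : ℝ))
  smul_mem' c f (hf : ContDiff ℝ (⊤ : ℕ∞) f) := hf.const_smul c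

lemma contDiff_coe_smoothFunctions (f : smoothFunctions n) :
    ContDiff ℝ (⊤ : ℕ∞) (f : (Fin n → ℝ) → ℝ) :=
  f.2

-- Instance search does not find this through `Pi.addCommMonoid`, and without it
-- `Module.End ℝ (smoothFunctions n)` is only a semiring.
instance : AddCommGroup (smoothFunctions n) := Submodule.addCommGroup _

instance : IsAddTorsionFree (smoothFunctions n) := .of_isTorsionFree ℝ _

def pdLinear (a : Fin n) : Module.End ℝ (smoothFunctions n) where
  toFun f := ⟨pd a f, contDiff_pd a (contDiff_coe_smoothFunctions f)⟩
  map_add' f₁ f₂ := Subtype.ext <| pd_add a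
    ((contDiff_coe_smoothFunctions f₁).differentiable (by simp))
    ((contDiff_coe_smoothFunctions f₂).differentiable (by simp))
  map_smul' c _ := Subtype.ext (pd_const_smul a c)

lemma pdLinear_mul_comm (a b : Fin n) : pdLinear a * pdLinear b = pdLinear b * pdLinear a :=
  LinearMap.ext fun f => Subtype.ext (pd_comm a b (contDiff_coe_smoothFunctions f))

abbrev partialDerivAlgebra (n : ℕ) : Subalgebra ℝ (Module.End ℝ (smoothFunctions n)) :=
  Algebra.adjoin ℝ (Set.range pdLinear)

instance : IsMulCommutative (partialDerivAlgebra n) :=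
  Algebra.isMulCommutative_adjoin ℝ (by rintro _ ⟨a, rfl⟩ _ ⟨b, rfl⟩; exact pdLinear_mul_comm a b)

def partialDeriv (a : Fin n) : partialDerivAlgebra n :=
  ⟨pdLinear a, Algebra.subset_adjoin ⟨a, rfl⟩⟩

-- Turns the `IsMulCommutative` instance into a `CommRing` structure on `partialDerivAlgebra n`.
open scoped IsMulCommutative

lemma coe_partialDeriv_mul_smul (r s : Fin n) (f : smoothFunctions n) :
    (((partialDeriv r * partialDeriv s) • f : smoothFunctions n) : (Fin n → ℝ) → ℝ) =
      pd r (pd s f) :=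
  rfl

lemma coe_mulVec_partialDeriv_smul (ginv : Matrix (Fin n) (Fin n) ℝ) (a : Fin n)
    (f : smoothFunctions n) :
    ((((ginv.map (algebraMap ℝ (partialDerivAlgebra n)) *ᵥ partialDeriv) a • f :
      smoothFunctions n) : (Fin n → ℝ) → ℝ)) = pdUp ginv a f := by
  have hrow : (ginv.map (algebraMap ℝ (partialDerivAlgebra n)) *ᵥ partialDeriv) a =
      ∑ b, algebraMap ℝ _ (ginv a b) * partialDeriv b := rfl
  ext x
  rw [hrow, Finset.sum_smul, AddSubmonoidClass.coe_finsetSum, Finset.sum_apply]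
  rfl

theorem pdUp_doubleDivergence_add_eq_zero {g ginv : Matrix (Fin n) (Fin n) ℝ} (hg : g.IsSymm)
    (hgg : g * ginv = 1) {k : Fin n → Fin n → Fin n → (Fin n → ℝ) → ℝ}
    (hsmooth : ∀ a b c, ContDiff ℝ (⊤ : ℕ∞) (k a b c))
    (h₁₂ : ∀ a b c, k a b c = k b a c) (h₂₃ : ∀ a b c, k a b c = k a c b)
    (hkill : ∀ a b c d x, pdUp ginv a (k b c d) x + pdUp ginv b (k a c d) x +
      pdUp ginv c (k a b d) x + pdUp ginv d (k a b c) x = 0) (a b : Fin n) (x : Fin n → ℝ) :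
    pdUp ginv a (fun x => ∑ r, ∑ s, pd r (pd s (k r s b)) x) x +
      pdUp ginv b (fun x => ∑ r, ∑ s, pd r (pd s (k r s a)) x) x = 0 := by
  let K : Fin n → Fin n → Fin n → smoothFunctions n := fun a b c => ⟨k a b c, hsmooth a b c⟩
  have hdd (c : Fin n) :
      ((KillingTensor.doubleDivergence partialDeriv K c : smoothFunctions n) : (Fin n → ℝ) → ℝ) =
      fun x => ∑ r, ∑ s, pd r (pd s (k r s c)) x := by
    ext y
    simp only [KillingTensor.doubleDivergence, AddSubmonoidClass.coe_finsetSum, Finset.sum_apply,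
      coe_partialDeriv_mul_smul, K]
  have hkill' : KillingTensor.KillingEquation (ginv.map (algebraMap ℝ (partialDerivAlgebra n)))
      partialDeriv K := fun a b c d => Subtype.ext <| funext fun x => by
    simp only [Submodule.coe_add, Pi.add_apply, coe_mulVec_partialDeriv_smul,
      ZeroMemClass.coe_zero, Pi.zero_apply]
    exact hkill a b c d x
  have key := congrArg (fun F : smoothFunctions n => (F : (Fin n → ℝ) → ℝ) x)
    (KillingTensor.mulVec_smul_doubleDivergence_add_eq_zero (hg.map _)
      (by rw [← Matrix.map_mul, hgg, Matrix.map_one _ (map_zero _) (map_one _)])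
      (fun a b c => Subtype.ext (h₁₂ a b c)) (fun a b c => Subtype.ext (h₂₃ a b c)) hkill' a b)
  simpa only [Submodule.coe_add, Pi.add_apply, coe_mulVec_partialDeriv_smul, hdd,
    ZeroMemClass.coe_zero, Pi.zero_apply] using key

end SmoothFunctions

theorem stmt15_general {n : ℕ}
    (g ginv : Matrix (Fin n) (Fin n) ℝ) (hgsym : g.IsSymm) (hginv : g * ginv = 1)
    (k : Fin n → Fin n → Fin n → (Fin n → ℝ) → ℝ)
    (hsmooth : ∀ a b c, ContDiff ℝ (⊤ : ℕ∞) (k a b c))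
    (hsymk : ∀ (a b c : Fin n) (σ : Equiv.Perm (Fin 3)),
      k (![a, b, c] (σ 0)) (![a, b, c] (σ 1)) (![a, b, c] (σ 2)) = k a b c)
    (hkill : ∀ (a b c d : Fin n) (x : Fin n → ℝ),
      pdUp ginv a (k b c d) x + pdUp ginv b (k a c d) x +
        pdUp ginv c (k a b d) x + pdUp ginv d (k a b c) x = 0)
    (v : Fin n → (Fin n → ℝ) → ℝ)
    (hv : ∀ (a : Fin n) (x : Fin n → ℝ), v a x = ∑ r, ∑ s, pd r (pd s (k r s a)) x) :
    ∀ (a b : Fin n) (x : Fin n → ℝ), pdUp ginv a (v b) x + pdUp ginv b (v a) x = 0 := by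
  have h₁₂ (a b c : Fin n) : k a b c = k b a c := by
    simpa [Equiv.swap_apply_of_ne_of_ne] using (hsymk a b c (Equiv.swap 0 1)).symm
  have h₂₃ (a b c : Fin n) : k a b c = k a c b := by
    simpa [Equiv.swap_apply_of_ne_of_ne] using (hsymk a b c (Equiv.swap 1 2)).symm
  obtain rfl : v = fun a x => ∑ r, ∑ s, pd r (pd s (k r s a)) x := funext fun a => funext (hv a)
  exact pdUp_doubleDivergence_add_eq_zero hgsym hginv hsmooth h₁₂ h₂₃ hkill

/-- for a Killing 3-tensor `k` on `ℝⁿ`, the double divergence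
`v^a = ∂_r ∂_s k^{rsa}` is a Killing vector field: `∂^a v^b + ∂^b v^a = 0`. -/
theorem stmt15 {n : ℕ} (hn : 0 < n)
    (g ginv : Matrix (Fin n) (Fin n) ℝ) (hgsym : g.IsSymm) (hginv : g * ginv = 1)
    (k : Fin n → Fin n → Fin n → (Fin n → ℝ) → ℝ)
    (hsmooth : ∀ a b c, ContDiff ℝ (⊤ : ℕ∞) (k a b c))
    (hsymk : ∀ (a b c : Fin n) (σ : Equiv.Perm (Fin 3)),
      k (![a, b, c] (σ 0)) (![a, b, c] (σ 1)) (![a, b, c] (σ 2)) = k a b c)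
    (hkill : ∀ (a b c d : Fin n) (x : Fin n → ℝ),
      pdUp ginv a (k b c d) x + pdUp ginv b (k a c d) x +
        pdUp ginv c (k a b d) x + pdUp ginv d (k a b c) x = 0)
    (v : Fin n → (Fin n → ℝ) → ℝ)
    (hv : ∀ (a : Fin n) (x : Fin n → ℝ), v a x = ∑ r, ∑ s, pd r (pd s (k r s a)) x) :
    ∀ (a b : Fin n) (x : Fin n → ℝ), pdUp ginv a (v b) x + pdUp ginv b (v a) x = 0 :=
  stmt15_general g ginv hgsym hginv k hsmooth hsymk hkill v hv
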